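/- arXiv:0809.0536 — 5 statements merged into one kernel-verified Lean document; each statement's English description precedes it below -/
import Mathlib

section
/- For any set of N unit-norm vectors b_1,…,b_N in C^{N_t} with N ≥ N_t, the maximum cross-correlation satisfies max_{l≠n} |b_l^H b_n| ≥ √((N − N_t)/(N_t(N − 1))). -/
open scoped InnerProductSpace

/-!
With the coordinates of the `b n` as columns of a matrix `B`, the frame potential
`∑ l, ∑ n, |⟪b l, b n⟫|²` is the squared Frobenius norm of the Gram matrix `Bᴴ B`, which equals
that of the `Nt × Nt` matrix `B Bᴴ`. By Cauchy–Schwarz on its diagonal this is at least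
`(tr B Bᴴ)² / Nt = N² / Nt`. The diagonal terms `|⟪b n, b n⟫|² = 1` contribute `N`, so the
`N (N - 1)` off-diagonal terms average at least `(N - Nt) / (Nt (N - 1))`.
-/

open Finset Matrix Module RCLike

namespace Matrix

variable {𝕜 m n : Type*} [RCLike 𝕜] [Fintype m] [Fintype n]

theorem sum_norm_sq_eq_re_trace_mul_conjTranspose (A : Matrix m n 𝕜) :
    ∑ i, ∑ j, ‖A i j‖ ^ 2 = re (A * Aᴴ).trace := by
  simp only [trace, diag, mul_apply, conjTranspose_apply, RCLike.star_def, RCLike.mul_conj,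
    map_sum]
  norm_cast

theorem sum_norm_sq_conjTranspose_mul_self (A : Matrix m n 𝕜) :
    ∑ i, ∑ j, ‖(Aᴴ * A) i j‖ ^ 2 = ∑ i, ∑ j, ‖(A * Aᴴ) i j‖ ^ 2 := by
  simp only [sum_norm_sq_eq_re_trace_mul_conjTranspose, conjTranspose_mul,
    conjTranspose_conjTranspose, Matrix.mul_assoc]
  rw [trace_mul_comm, Matrix.mul_assoc, Matrix.mul_assoc]

theorem sq_re_trace_le_card_mul_sum_norm_sq (M : Matrix m m 𝕜) :
    re M.trace ^ 2 ≤ Fintype.card m * ∑ i, ∑ j, ‖M i j‖ ^ 2 :=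
  calc re M.trace ^ 2 = (∑ i, re (M i i)) ^ 2 := by simp [trace]
    _ ≤ Fintype.card m * ∑ i, re (M i i) ^ 2 := sq_sum_le_card_mul_sum_sq
    _ ≤ Fintype.card m * ∑ i, ∑ j, ‖M i j‖ ^ 2 := by
      gcongr with i
      calc re (M i i) ^ 2 ≤ ‖M i i‖ ^ 2 := by
            rw [← sq_abs]; gcongr; exact abs_re_le_norm _
        _ ≤ ∑ j, ‖M i j‖ ^ 2 :=
          single_le_sum (f := fun j ↦ ‖M i j‖ ^ 2) (fun _ _ ↦ by positivity) (mem_univ i)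

end Matrix

theorem sq_sum_norm_sq_le_finrank_mul_sum_norm_inner_sq {𝕜 E ι : Type*} [RCLike 𝕜]
    [NormedAddCommGroup E] [InnerProductSpace 𝕜 E] [FiniteDimensional 𝕜 E] [Fintype ι]
    (v : ι → E) :
    (∑ i, ‖v i‖ ^ 2) ^ 2 ≤ finrank 𝕜 E * ∑ i, ∑ j, ‖⟪v i, v j⟫_𝕜‖ ^ 2 := by
  set A : Matrix (Fin (finrank 𝕜 E)) ι 𝕜 := of fun i j ↦ (stdOrthonormalBasis 𝕜 E).repr (v j) i
  have hgram : gram 𝕜 v = Aᴴ * A := gram_eq_conjTranspose_mul _ v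
  have htrace : ∑ i, ‖v i‖ ^ 2 = re (A * Aᴴ).trace := by
    rw [trace_mul_comm, ← hgram]
    simp [trace, gram_apply]
  have hsum : ∑ i, ∑ j, ‖⟪v i, v j⟫_𝕜‖ ^ 2 = ∑ i, ∑ j, ‖(A * Aᴴ) i j‖ ^ 2 := by
    simp only [← sum_norm_sq_conjTranspose_mul_self, ← hgram, gram_apply]
  rw [htrace, hsum]
  simpa using sq_re_trace_le_card_mul_sum_norm_sq (A * Aᴴ)

theorem exists_ne_le_of_card_mul_le_sum_sub_diag {ι : Type*} [Fintype ι] [DecidableEq ι]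
    (hι : 2 ≤ Fintype.card ι) (f : ι → ι → ℝ) (c : ℝ)
    (hc : Fintype.card ι * (Fintype.card ι - 1) * c ≤ ∑ l, ∑ n, f l n - ∑ l, f l l) :
    ∃ l n, l ≠ n ∧ c ≤ f l n := by
  have hrows : ∑ l, ∑ n, f l n - ∑ l, f l l = ∑ l, ∑ n ∈ univ.erase l, f l n := by
    simp only [sum_erase_eq_sub (mem_univ _), sum_sub_distrib]
  have hconst : ∀ l : ι, ∑ n ∈ univ.erase l, c = (Fintype.card ι - 1) * c := by
    intro l
    rw [sum_const, card_erase_of_mem (mem_univ l), card_univ, nsmul_eq_mul,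
      Nat.cast_sub (by omega), Nat.cast_one]
  have hnonempty : ∀ l : ι, (univ.erase l).Nonempty := by
    intro l
    rw [← card_pos, card_erase_of_mem (mem_univ l), card_univ]
    omega
  have : Nonempty ι := Fintype.card_pos_iff.mp (by omega)
  obtain ⟨l, -, hl⟩ := exists_le_of_sum_le univ_nonempty (f := fun l ↦ ∑ n ∈ univ.erase l, c)
    (g := fun l ↦ ∑ n ∈ univ.erase l, f l n) (by
      rw [← hrows]; simpa [hconst, mul_assoc] using hc)
  obtain ⟨n, hn, hcn⟩ := exists_le_of_sum_le (hnonempty l) hl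
  exact ⟨l, n, (ne_of_mem_erase hn).symm, hcn⟩

theorem exists_ne_welch_le_norm_inner_sq {𝕜 E ι : Type*} [RCLike 𝕜] [NormedAddCommGroup E]
    [InnerProductSpace 𝕜 E] [FiniteDimensional 𝕜 E] [Fintype ι] (hι : 2 ≤ Fintype.card ι)
    (v : ι → E) (hv : ∀ i, ‖v i‖ = 1) :
    ∃ l n, l ≠ n ∧ ((Fintype.card ι : ℝ) - finrank 𝕜 E) /
      (finrank 𝕜 E * ((Fintype.card ι : ℝ) - 1)) ≤ ‖⟪v l, v n⟫_𝕜‖ ^ 2 := by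
  classical
  set N : ℝ := (Fintype.card ι : ℝ)
  set d : ℝ := (finrank 𝕜 E : ℝ)
  have hN1 : N - 1 ≠ 0 := by
    have : (2 : ℝ) ≤ N := by simp only [N]; exact_mod_cast hι
    linarith
  have hd : 0 < d := by
    have : Nonempty ι := Fintype.card_pos_iff.mp (by omega)
    have : Nontrivial E := ⟨⟨v (Classical.arbitrary ι), 0, norm_ne_zero_iff.mp (by simp [hv])⟩⟩
    exact Nat.cast_pos.mpr (finrank_pos (R := 𝕜))
  have hframe : N ^ 2 ≤ d * ∑ l, ∑ n, ‖⟪v l, v n⟫_𝕜‖ ^ 2 := by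
    simpa [hv, N, d] using sq_sum_norm_sq_le_finrank_mul_sum_norm_inner_sq (𝕜 := 𝕜) v
  apply exists_ne_le_of_card_mul_le_sum_sub_diag hι
  have hdiag : ∑ l, ‖⟪v l, v l⟫_𝕜‖ ^ 2 = N := by simp [hv, N]
  have hcoeff : N * (N - 1) * ((N - d) / (d * (N - 1))) = N ^ 2 / d - N := by
    field_simp
  rw [hdiag, hcoeff, sub_le_sub_iff_right, div_le_iff₀ hd, mul_comm]
  exact hframe

theorem welch_bound_general (Nt N : ℕ) (hN2 : 2 ≤ N)
    (b : Fin N → EuclideanSpace ℂ (Fin Nt)) (hb : ∀ n, ‖b n‖ = 1) :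
    ∃ l n : Fin N, l ≠ n ∧
      Real.sqrt (((N : ℝ) - Nt) / (Nt * ((N : ℝ) - 1))) ≤ ‖⟪b l, b n⟫_ℂ‖ := by
  obtain ⟨l, n, hln, h⟩ := exists_ne_welch_le_norm_inner_sq (𝕜 := ℂ) (by simpa using hN2) b hb
  rw [finrank_euclideanSpace_fin, Fintype.card_fin] at h
  exact ⟨l, n, hln, (Real.sqrt_le_sqrt h).trans_eq (Real.sqrt_sq (norm_nonneg _))⟩

/-- Welch bound: the maximum cross-correlation of `N ≥ Nt` unit-norm vectors in `ℂ^Nt`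
is at least `√((N − Nt)/(Nt(N − 1)))`. -/
theorem welch_bound (Nt N : ℕ) (hNt : 1 ≤ Nt) (hN : Nt ≤ N) (hN2 : 2 ≤ N)
    (b : Fin N → EuclideanSpace ℂ (Fin Nt)) (hb : ∀ n, ‖b n‖ = 1) :
    ∃ l n : Fin N, l ≠ n ∧
      Real.sqrt (((N : ℝ) - Nt) / (Nt * ((N : ℝ) - 1))) ≤ ‖⟪b l, b n⟫_ℂ‖ :=
  welch_bound_general Nt N hN2 b hb
end

section
/- The 7 vectors b_n = (1/√3)(e^{2πi·n·0/7}, e^{2πi·n·1/7}, e^{2πi·n·5/7})^T for n = 1,…,7 in C³ are unit-norm and equiangular with |b_l^H b_n| = √2/3 = √(3−1)/3 for all l ≠ n, achieving the Welch bound √((7−3)/(3·6)) = √(2/9). -/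
open Complex Real ComplexConjugate

/-!
With `ζ = e^{2πi/7}` the vectors are the harmonic frame vectors `b_n = (ζ^{n d_i})_i / √3`.
Since `|ζ| = 1` they are unit vectors, and `⟨b_l, b_n⟩ = (1 + w + w⁵) / 3` with `w = ζ^{n-l}` a
nontrivial 7th root of unity. Because `{0, 1, 5}` is a difference set mod 7,
`|1 + w + w⁵|² = (1 + w + w⁵)(1 + w⁶ + w²) = 3 + (w + w² + ⋯ + w⁶) = 3 - 1 = 2`.
-/

noncomputable def harmonicFrame {k : ℕ} (ζ : ℂ) (d : Fin k → ℕ) (n : ℕ) (i : Fin k) : ℂ :=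
  (√k : ℂ)⁻¹ * ζ ^ (n * d i)

section HarmonicFrame

variable {k : ℕ} {ζ : ℂ} (d : Fin k → ℕ)

theorem norm_harmonicFrame (hζ : ‖ζ‖ = 1) (n : ℕ) (i : Fin k) :
    ‖harmonicFrame ζ d n i‖ = (√k)⁻¹ := by
  simp [harmonicFrame, hζ]

theorem sum_norm_sq_harmonicFrame [NeZero k] (hζ : ‖ζ‖ = 1) (n : ℕ) :
    ∑ i, ‖harmonicFrame ζ d n i‖ ^ 2 = 1 := by
  simp [norm_harmonicFrame d hζ, inv_pow, NeZero.ne]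

theorem sum_conj_mul_harmonicFrame (hζ : ‖ζ‖ = 1) (l n : ℕ) :
    ∑ i, conj (harmonicFrame ζ d l i) * harmonicFrame ζ d n i =
      (k : ℂ)⁻¹ * ∑ i, (ζ ^ ((n : ℤ) - l)) ^ d i := by
  have hζ0 : ζ ≠ 0 := norm_ne_zero_iff.mp (by simp [hζ])
  have hscale : conj (√k : ℂ)⁻¹ * (√k : ℂ)⁻¹ = (k : ℂ)⁻¹ := by
    rw [map_inv₀, conj_ofReal, ← mul_inv, ← ofReal_mul, Real.mul_self_sqrt k.cast_nonneg,
      ofReal_natCast]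
  have hphase (i : Fin k) :
      conj (ζ ^ (l * d i)) * ζ ^ (n * d i) = (ζ ^ ((n : ℤ) - l)) ^ d i := by
    rw [← inv_eq_conj (by simp [hζ]), ← zpow_natCast, ← zpow_natCast, ← zpow_neg,
      ← zpow_add₀ hζ0, ← zpow_natCast, ← zpow_mul]
    push_cast
    ring_nf
  rw [Finset.mul_sum]
  refine Finset.sum_congr rfl fun i _ => ?_
  rw [harmonicFrame, harmonicFrame, map_mul, ← hphase, ← hscale]
  ring

end HarmonicFrame

theorem IsPrimitiveRoot.zpow_sub_ne_one {G : Type*} [DivisionCommMonoid G] {ζ : G} {N : ℕ}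
    (hζ : IsPrimitiveRoot ζ N) {l n : Fin N} (h : l ≠ n) : ζ ^ ((n : ℤ) - l) ≠ 1 := by
  rw [Ne, hζ.zpow_eq_one_iff_dvd]
  intro hdvd
  have hlt : |(n : ℤ) - l| < N := abs_sub_lt_iff.mpr ⟨by omega, by omega⟩
  have := Int.eq_zero_of_abs_lt_dvd hdvd hlt
  exact h (Fin.ext (by omega))

theorem norm_one_add_add_pow_five {w : ℂ} (h7 : w ^ 7 = 1) (h1 : w ≠ 1) :
    ‖1 + w + w ^ 5‖ = √2 := by
  have hconj : conj w = w ^ 6 := by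
    rw [← inv_eq_conj (norm_eq_one_of_pow_eq_one h7 (by norm_num))]
    exact inv_eq_of_mul_eq_one_right (by rw [← pow_succ']; exact h7)
  have hconj_sum : conj (1 + w + w ^ 5) = 1 + w ^ 6 + w ^ 2 := by
    simp only [map_add, map_one, map_pow, hconj]
    linear_combination w ^ 2 * (w ^ 21 + w ^ 14 + w ^ 7 + 1) * h7
  have hgeom : ∑ i ∈ Finset.range 7, w ^ i = 0 := by
    have h := mul_neg_geom_sum w 7
    rw [h7, sub_self] at h
    exact (mul_eq_zero.mp h).resolve_left (sub_ne_zero.mpr h1.symm)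
  simp only [Finset.sum_range_succ, Finset.sum_range_zero] at hgeom
  rw [norm_def]
  congr 1
  apply ofReal_injective
  rw [← mul_conj, hconj_sum]
  push_cast
  linear_combination (2 + w ^ 4) * h7 + hgeom

theorem exp_two_pi_I_mul_div (m N : ℕ) :
    exp (2 * π * I * m / N) = exp (2 * π * I / N) ^ m := by
  rw [← Complex.exp_nat_mul]
  ring_nf

/-- The harmonic frame from the difference set `{0,1,5}` mod 7 is a unit-norm
equiangular frame of 7 vectors in `ℂ³` with coherence `√2/3`, achieving the Welch bound. -/
theorem grassmannian_frame_3_7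
    (d : Fin 3 → ℕ) (hd : d = ![0, 1, 5])
    (b : Fin 7 → Fin 3 → ℂ)
    (hb : ∀ (n : Fin 7) (i : Fin 3),
      b n i = (1 / (Real.sqrt 3 : ℂ)) *
        Complex.exp (2 * Real.pi * Complex.I * ((n : ℕ) + 1) * (d i) / 7)) :
    (∀ n, Real.sqrt (∑ i, ‖b n i‖ ^ 2) = 1) ∧
    (∀ l n : Fin 7, l ≠ n →
      ‖∑ i, (starRingEnd ℂ) (b l i) * b n i‖ = Real.sqrt 2 / 3) ∧
    Real.sqrt 2 / 3 = Real.sqrt ((7 - 3 : ℝ) / (3 * (7 - 1))) := by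
  set ζ := exp (2 * π * I / (7 : ℕ))
  have hζ : IsPrimitiveRoot ζ 7 := isPrimitiveRoot_exp 7 (by norm_num)
  have hζ1 : ‖ζ‖ = 1 := hζ.norm'_eq_one (by norm_num)
  obtain rfl : b = fun n : Fin 7 => harmonicFrame ζ d ((n : ℕ) + 1) := by
    ext n i
    rw [hb, harmonicFrame, one_div, ← exp_two_pi_I_mul_div]
    push_cast
    ring_nf
  refine ⟨fun n => by rw [sum_norm_sq_harmonicFrame d hζ1, Real.sqrt_one], fun l n hln => ?_, ?_⟩
  · have hw7 : (ζ ^ ((n : ℤ) - l)) ^ 7 = 1 := by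
      rw [← zpow_natCast, ← zpow_mul, hζ.zpow_eq_one_iff_dvd]
      exact dvd_mul_left _ _
    rw [sum_conj_mul_harmonicFrame d hζ1, hd, Fin.sum_univ_three]
    simp only [Nat.cast_add, Nat.cast_one, add_sub_add_right_eq_sub, Matrix.cons_val_zero,
      Matrix.cons_val_one, Matrix.cons_val, pow_zero, pow_one, norm_mul, norm_inv,
      Complex.norm_natCast]
    rw [norm_one_add_add_pow_five hw7 (hζ.zpow_sub_ne_one hln)]
    push_cast
    ring
  · rw [show (7 - 3 : ℝ) / (3 * (7 - 1)) = 2 / 3 ^ 2 by norm_num,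
      Real.sqrt_div' _ (by norm_num), Real.sqrt_sq (by norm_num)]
end

section
/- The 13 vectors b_n = (1/2)(e^{2πi·n·0/13}, e^{2πi·n·1/13}, e^{2πi·n·3/13}, e^{2πi·n·9/13})^T for n = 1,…,13 in C⁴ are unit-norm and equiangular with |b_l^H b_n| = √3/4 for all l ≠ n, achieving the Welch bound √((13−4)/(4·12)) = √(3/16). -/
open Complex Real

/-!
The entries of `b n` are `½ ψ((n+1) dᵢ)` for the standard additive character `ψ` of `ZMod 13`,
so `b_lᴴ b_n = ¼ ∑ᵢ ψ((n-l) dᵢ)` is a character sum over the difference set. For a nontrivial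
character `χ`, `|∑ᵢ χ(dᵢ)|² = ∑_{i,q} χ(dᵢ - d_q)`; each nonzero residue occurs `λ` times as a
difference and `0` occurs `k` times, so this is `k + λ ∑_{g ≠ 0} χ(g) = k - λ`, i.e. `4 - 1 = 3`.
-/

open Finset

/-- A `(|G|, |ι|, lam)` difference set, given as an injective family. -/
def IsDifferenceSet {ι G : Type*} [Fintype ι] [AddGroup G] [DecidableEq G] (d : ι → G)
    (lam : ℕ) : Prop :=
  Function.Injective d ∧ ∀ g ≠ 0, #{p : ι × ι | d p.1 - d p.2 = g} = lam

lemma AddChar.conj_mul_apply {G : Type*} [AddCommGroup G] [Finite G] (ψ : AddChar G ℂ)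
    (x y : G) :
    (starRingEnd ℂ) (ψ x) * ψ y = ψ (y - x) := by
  rw [← AddChar.map_neg_eq_conj, ← AddChar.map_add_eq_mul, neg_add_eq_sub]

section DifferenceSet

variable {ι G : Type*} [Fintype ι] [AddCommGroup G] [DecidableEq G]

-- Shaped so that summing against a character gives `lam * ∑ ψ + (|ι| - lam) * ψ 0`.
lemma IsDifferenceSet.card_filter_sub_eq {d : ι → G} {lam : ℕ} (hd : IsDifferenceSet d lam)
    (g : G) : (#{p : ι × ι | d p.1 - d p.2 = g} : ℂ) =
      lam + if g = 0 then (Fintype.card ι - lam : ℂ) else 0 := by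
  split_ifs with hg
  · subst hg
    have hdiag : ({p : ι × ι | d p.1 - d p.2 = 0} : Finset (ι × ι)) = (univ : Finset ι).diag := by
      ext p
      simp [sub_eq_zero, hd.1.eq_iff]
    rw [hdiag, diag_card, card_univ]
    ring
  · rw [hd.2 g hg, add_zero]

lemma IsDifferenceSet.sq_norm_sum_addChar [Fintype G] {d : ι → G} {lam : ℕ}
    (hd : IsDifferenceSet d lam) {ψ : AddChar G ℂ} (hψ : ψ ≠ 1) :
    ‖∑ i, ψ (d i)‖ ^ 2 = (Fintype.card ι : ℝ) - lam := by
  have hpairs : (∑ i, ψ (d i)) * (starRingEnd ℂ) (∑ i, ψ (d i)) =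
      ∑ p : ι × ι, ψ (d p.1 - d p.2) := by
    rw [map_sum, sum_mul_sum, ← univ_product_univ, sum_product]
    simp_rw [mul_comm (ψ _), AddChar.conj_mul_apply]
  have hfibres : ∑ p : ι × ι, ψ (d p.1 - d p.2) =
      ∑ g, (#{p : ι × ι | d p.1 - d p.2 = g} : ℂ) * ψ g := by
    rw [← sum_fiberwise univ (fun p : ι × ι => d p.1 - d p.2)]
    refine sum_congr rfl fun g _ => ?_
    rw [sum_congr rfl fun p hp => congrArg ψ (mem_filter.1 hp).2, sum_const, nsmul_eq_mul]
  have hsum : ∑ p : ι × ι, ψ (d p.1 - d p.2) = (Fintype.card ι : ℂ) - lam := by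
    simp_rw [hfibres, hd.card_filter_sub_eq, add_mul, sum_add_distrib, ← mul_sum,
      AddChar.sum_eq_zero_of_ne_one hψ, ite_mul, zero_mul, sum_ite_eq', mem_univ, if_true,
      AddChar.map_zero_eq_one]
    ring
  exact_mod_cast (mul_conj' _).symm.trans (hpairs.trans hsum)

end DifferenceSet

section HarmonicFrame

variable {N : ℕ} [NeZero N] {ι : Type*} [Fintype ι]

lemma exp_two_pi_mul_I_natCast_div (j : ℕ) :
    exp (2 * π * I * j / N) = ZMod.stdAddChar (j : ZMod N) := by
  simpa using (ZMod.stdAddChar_coe (N := N) j).symm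

lemma norm_sum_conj_stdAddChar_mul {d : ι → ZMod N} {lam : ℕ} (hd : IsDifferenceSet d lam)
    {a a' : ZMod N} (h : a ≠ a') :
    ‖∑ i, (starRingEnd ℂ) (ZMod.stdAddChar (a * d i)) * ZMod.stdAddChar (a' * d i)‖ =
      √((Fintype.card ι : ℝ) - lam) := by
  have hψ : ZMod.stdAddChar.mulShift (a' - a) ≠ 1 :=
    ZMod.isPrimitive_stdAddChar N (sub_ne_zero.2 h.symm)
  simp_rw [AddChar.conj_mul_apply, ← sub_mul, ← AddChar.mulShift_apply]
  rw [← hd.sq_norm_sum_addChar hψ, sqrt_sq (norm_nonneg _)]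

end HarmonicFrame

lemma isDifferenceSet_zero_one_three_nine :
    IsDifferenceSet (fun i => ((![0, 1, 3, 9] : Fin 4 → ℕ) i : ZMod 13)) 1 :=
  ⟨by decide, by decide⟩

/-- The harmonic frame from the difference set `{0,1,3,9}` mod 13 is a unit-norm
equiangular frame of 13 vectors in `ℂ⁴` with coherence `√3/4`, achieving the Welch bound. -/
theorem grassmannian_frame_4_13
    (d : Fin 4 → ℕ) (hd : d = ![0, 1, 3, 9])
    (b : Fin 13 → Fin 4 → ℂ)
    (hb : ∀ (n : Fin 13) (i : Fin 4),
      b n i = (1 / 2 : ℂ) *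
        Complex.exp (2 * Real.pi * Complex.I * ((n : ℕ) + 1) * (d i) / 13)) :
    (∀ n, Real.sqrt (∑ i, ‖b n i‖ ^ 2) = 1) ∧
    (∀ l n : Fin 13, l ≠ n →
      ‖∑ i, (starRingEnd ℂ) (b l i) * b n i‖ = Real.sqrt 3 / 4) ∧
    Real.sqrt 3 / 4 = Real.sqrt ((13 - 4 : ℝ) / (4 * (13 - 1))) := by
  set freq : Fin 13 → ZMod 13 := fun n => ((n : ℕ) + 1 : ℕ)
  have hb' : ∀ n i, b n i = (1 / 2 : ℂ) * ZMod.stdAddChar (freq n * (d i : ZMod 13)) := by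
    intro n i
    rw [hb, ← Nat.cast_mul, ← exp_two_pi_mul_I_natCast_div]
    push_cast
    ring_nf
  have hfreq : Function.Injective freq := by
    intro l n h
    have := congrArg ZMod.val (by simpa [freq] using h : ((l : ℕ) : ZMod 13) = (n : ℕ))
    rw [ZMod.val_natCast, ZMod.val_natCast, Nat.mod_eq_of_lt l.isLt,
      Nat.mod_eq_of_lt n.isLt] at this
    exact Fin.ext this
  refine ⟨fun n => ?_, fun l n hln => ?_, ?_⟩
  · norm_num [hb', AddChar.norm_apply]
  · have hdset := hd ▸ isDifferenceSet_zero_one_three_nine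
    have hconj : (starRingEnd ℂ) (1 / 2) = (1 / 2 : ℂ) := by simp [map_ofNat]
    simp_rw [hb', map_mul, hconj, mul_mul_mul_comm, ← mul_sum, norm_mul,
      norm_sum_conj_stdAddChar_mul hdset (hfreq.ne hln)]
    norm_num [div_eq_inv_mul]
  · rw [show (13 - 4 : ℝ) / (4 * (13 - 1)) = 3 / 4 ^ 2 by norm_num, sqrt_div' _ (by norm_num),
      sqrt_sq (by norm_num)]
end

section
/- The matrix D = (1/2)·[[−i,−i,−i,−i],[1,−1,1,−1],[−i,−i,i,i],[−1,1,1,−1]] is unitary, and the four bases given by the columns of D, D², D³, D⁴ are pairwise mutually unbiased in C⁴: any inner product between a column of D^a and a column of D^b with 1 ≤ a < b ≤ 4 has absolute value 1/2. -/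
open Complex Matrix

/-!
Since `D` is unitary, `(Dᵃ)ᴴ Dᵇ = Dᵇ⁻ᵃ`, so the inner products in question are the entries of
`D`, `D²` and `D³`. Each of these powers is `1/2` times a matrix with entries in `{±1, ±i}`.
-/

theorem pow_mul_pow_of_mul_eq_one {M : Type*} [Monoid M] {x y : M} (h : x * y = 1) {a b : ℕ}
    (hab : a ≤ b) : x ^ a * y ^ b = y ^ (b - a) := by
  obtain ⟨c, rfl⟩ := Nat.exists_eq_add_of_le hab
  rw [pow_add, ← mul_assoc, pow_mul_pow_eq_one a h, one_mul, Nat.add_sub_cancel_left]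

theorem star_pow_mul_pow_of_le {R : Type*} [Monoid R] [StarMul R] {u : R} (hu : star u * u = 1)
    {a b : ℕ} (hab : a ≤ b) : star (u ^ a) * u ^ b = u ^ (b - a) := by
  rw [star_pow]
  exact pow_mul_pow_of_mul_eq_one hu hab

theorem Matrix.sum_conj_mul_eq_conjTranspose_mul_apply {n : Type*} [Fintype n]
    (A B : Matrix n n ℂ) (l k : n) :
    ∑ i, (starRingEnd ℂ) (A i l) * B i k = (Aᴴ * B) l k := by
  simp [Matrix.mul_apply]

theorem Matrix.norm_smul_apply_of_norm_apply_eq_one {n : Type*} {A : Matrix n n ℂ}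
    (hA : ∀ i j, ‖A i j‖ = 1) (c : ℂ) (i j : n) : ‖(c • A) i j‖ = ‖c‖ := by
  rw [smul_apply, smul_eq_mul, norm_mul, hA, mul_one]

namespace MUB4

noncomputable def H : Matrix (Fin 4) (Fin 4) ℂ :=
  !![-I, -I, -I, -I;
     1, -1, 1, -1;
     -I, -I, I, I;
     -1, 1, 1, -1]

noncomputable def H₂ : Matrix (Fin 4) (Fin 4) ℂ :=
  !![-1, -1, -I, I;
     -I, -I, -1, 1;
     -I, I, -1, -1;
     1, -1, I, I]

noncomputable def H₃ : Matrix (Fin 4) (Fin 4) ℂ :=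
  !![-1, I, I, 1;
     -1, I, -I, -1;
     I, -1, -1, -I;
     -I, 1, -1, -I]

theorem conjTranspose_H_mul_H : Hᴴ * H = (4 : ℂ) • 1 := by
  ext i j
  fin_cases i <;> fin_cases j <;>
    simp [H, Matrix.mul_apply, Fin.sum_univ_four] <;> ring_nf

theorem H_mul_H : H * H = (2 : ℂ) • H₂ := by
  ext i j
  fin_cases i <;> fin_cases j <;>
    simp [H, H₂, Matrix.mul_apply, Fin.sum_univ_four] <;> ring_nf

theorem H₂_mul_H : H₂ * H = (2 : ℂ) • H₃ := by
  ext i j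
  fin_cases i <;> fin_cases j <;>
    simp [H, H₂, H₃, Matrix.mul_apply, Fin.sum_univ_four] <;> ring_nf

theorem norm_H_apply (i j : Fin 4) : ‖H i j‖ = 1 := by
  fin_cases i <;> fin_cases j <;> simp [H]

theorem norm_H₂_apply (i j : Fin 4) : ‖H₂ i j‖ = 1 := by
  fin_cases i <;> fin_cases j <;> simp [H₂]

theorem norm_H₃_apply (i j : Fin 4) : ‖H₃ i j‖ = 1 := by
  fin_cases i <;> fin_cases j <;> simp [H₃]

theorem conjTranspose_half_H_mul_half_H : ((1 / 2 : ℂ) • H)ᴴ * ((1 / 2 : ℂ) • H) = 1 := by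
  rw [conjTranspose_smul, smul_mul_smul_comm, conjTranspose_H_mul_H, smul_smul]
  norm_num

theorem half_H_sq : ((1 / 2 : ℂ) • H) ^ 2 = (1 / 2 : ℂ) • H₂ := by
  rw [smul_pow, sq H, H_mul_H, smul_smul]
  norm_num

theorem half_H_cube : ((1 / 2 : ℂ) • H) ^ 3 = (1 / 2 : ℂ) • H₃ := by
  rw [smul_pow, pow_succ H, sq H, H_mul_H, smul_mul, H₂_mul_H, smul_smul, smul_smul]
  norm_num

theorem norm_half_H_pow_apply {k : ℕ} (hk₁ : 1 ≤ k) (hk₃ : k ≤ 3) (i j : Fin 4) :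
    ‖(((1 / 2 : ℂ) • H) ^ k) i j‖ = 1 / 2 := by
  obtain rfl | rfl | rfl : k = 1 ∨ k = 2 ∨ k = 3 := by omega
  · rw [pow_one, norm_smul_apply_of_norm_apply_eq_one norm_H_apply]; norm_num
  · rw [half_H_sq, norm_smul_apply_of_norm_apply_eq_one norm_H₂_apply]; norm_num
  · rw [half_H_cube, norm_smul_apply_of_norm_apply_eq_one norm_H₃_apply]; norm_num

end MUB4

/-- The concrete `4×4` matrix `D` is unitary and the bases given by the columns of
`D, D², D³, D⁴` are pairwise mutually unbiased in `ℂ⁴`. -/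
theorem mub_4x4 (D : Matrix (Fin 4) (Fin 4) ℂ)
    (hD : D = (1 / 2 : ℂ) •
      !![-Complex.I, -Complex.I, -Complex.I, -Complex.I;
         1, -1, 1, -1;
         -Complex.I, -Complex.I, Complex.I, Complex.I;
         -1, 1, 1, -1]) :
    Dᴴ * D = 1 ∧
    ∀ a b : ℕ, 1 ≤ a → a < b → b ≤ 4 → ∀ l n : Fin 4,
      ‖∑ i : Fin 4, (starRingEnd ℂ) ((D ^ a) i l) * ((D ^ b) i n)‖ = 1 / 2 := by
  replace hD : D = (1 / 2 : ℂ) • MUB4.H := hD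
  have hU : Dᴴ * D = 1 := hD ▸ MUB4.conjTranspose_half_H_mul_half_H
  refine ⟨hU, fun a b _ hab hb l n => ?_⟩
  rw [sum_conj_mul_eq_conjTranspose_mul_apply, ← star_eq_conjTranspose,
    star_pow_mul_pow_of_le hU hab.le, hD]
  exact MUB4.norm_half_H_pow_apply (by omega) (by omega) l n
end

section
/- For the SINR distribution F(γ) = 1 − exp(−mNγ/(ρ(1 − δ̂²γ))) on [0, 1/δ̂²), the growth function g(γ) = (1 − F(γ))/f(γ) = ρ(1−δ̂²γ)²/(mN) satisfies lim_{γ → (1/δ̂²)⁻} g′(γ) = 0; hence the von Mises condition holds and F lies in the domain of attraction of the Gumbel distribution H(γ) = exp(−e^{−γ}). -/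
/-!
With `t = 1 - δ²γ` and `A = mN/(ρδ²)` the tail is `1 - F(γ) = exp (A - A/t)`, and the growth
function `g` is a multiple of `t²`, so `g'` is a multiple of `t` and vanishes at the endpoint.
For the Gumbel limit put `L = log K + A` and choose `a_K, b_K` so that `t = A (L - x) / L²`;
then `K (1 - F(a_K + b_K x)) = exp (-x / (1 - x/L)) → e^{-x}`, and `(1 - τ_K / K)^K → exp (-τ)`
whenever `τ_K → τ`.
-/

open Filter Topology Real

theorem hasDerivAt_mul_one_sub_sq_div (ρ c δ γ : ℝ) :
    HasDerivAt (fun γ : ℝ => ρ * (1 - δ * γ) ^ 2 / c) (-(2 * ρ * δ * (1 - δ * γ) / c)) γ :=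
  ((((hasDerivAt_id' γ).const_mul δ).const_sub 1).fun_pow 2).const_mul ρ |>.div_const c
    |>.congr_deriv (by ring)

theorem tendsto_deriv_mul_one_sub_sq_div (ρ c : ℝ) {δ : ℝ} (hδ : δ ≠ 0) :
    Tendsto (deriv fun γ : ℝ => ρ * (1 - δ * γ) ^ 2 / c) (𝓝 (1 / δ)) (𝓝 0) := by
  rw [funext fun γ => (hasDerivAt_mul_one_sub_sq_div ρ c δ γ).deriv]
  exact (by fun_prop : Continuous _).tendsto' _ _ (by field_simp; simp)

theorem tendsto_pow_of_tendsto_mul_one_sub {p : ℕ → ℝ} {τ : ℝ}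
    (h : Tendsto (fun n : ℕ => n * (1 - p n)) atTop (𝓝 τ)) :
    Tendsto (fun n => p n ^ n) atTop (𝓝 (exp (-τ))) := by
  have h' : Tendsto (fun n : ℕ => n * (p n - 1)) atTop (𝓝 (-τ)) := by
    simpa only [← neg_sub 1 (p _), mul_neg] using h.neg
  simpa only [add_sub_cancel] using Real.tendsto_one_add_pow_exp_of_tendsto h'

noncomputable def sinrLocation (A δ L : ℝ) : ℝ := (1 - A / L) / δ

noncomputable def sinrScale (A δ L : ℝ) : ℝ := A / (δ * L ^ 2)

theorem sinrScale_pos {A δ L : ℝ} (hA : 0 < A) (hδ : 0 < δ) (hL : L ≠ 0) :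
    0 < sinrScale A δ L := by
  unfold sinrScale
  positivity

theorem sinr_exponent_sinrLocation_add {c ρ δ L : ℝ} (x : ℝ) (hc : c ≠ 0) (hρ : ρ ≠ 0)
    (hδ : δ ≠ 0) (hL : L ≠ 0) (hLx : L - x ≠ 0) :
    -(c * (sinrLocation (c / (ρ * δ)) δ L + sinrScale (c / (ρ * δ)) δ L * x)) /
        (ρ * (1 - δ * (sinrLocation (c / (ρ * δ)) δ L + sinrScale (c / (ρ * δ)) δ L * x))) =
      c / (ρ * δ) - L - x / (1 - x / L) := by
  set A := c / (ρ * δ)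
  have hA : A ≠ 0 := div_ne_zero hc (mul_ne_zero hρ hδ)
  have hc' : c = A * ρ * δ := by simp only [A]; field_simp
  have ht : 1 - δ * (sinrLocation A δ L + sinrScale A δ L * x) = A * (L - x) / L ^ 2 := by
    simp only [sinrLocation, sinrScale]; field_simp; ring
  rw [ht, hc']
  simp only [sinrLocation, sinrScale]
  field_simp
  ring

theorem tendsto_nat_mul_exp_sinr_exponent {c ρ δ : ℝ} (hc : c ≠ 0) (hρ : ρ ≠ 0) (hδ : δ ≠ 0)
    (x : ℝ) :
    Tendsto (fun K : ℕ => K * exp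
      (-(c * (sinrLocation (c / (ρ * δ)) δ (Real.log K + c / (ρ * δ)) +
          sinrScale (c / (ρ * δ)) δ (Real.log K + c / (ρ * δ)) * x)) /
        (ρ * (1 - δ * (sinrLocation (c / (ρ * δ)) δ (Real.log K + c / (ρ * δ)) +
          sinrScale (c / (ρ * δ)) δ (Real.log K + c / (ρ * δ)) * x)))))
      atTop (𝓝 (exp (-x))) := by
  set A := c / (ρ * δ)
  have hL : Tendsto (fun K : ℕ => Real.log K + A) atTop atTop :=
    tendsto_atTop_add_const_right _ _ (tendsto_log_atTop.comp tendsto_natCast_atTop_atTop)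
  have hlim : Tendsto (fun K : ℕ => exp (-(x / (1 - x / (Real.log K + A))))) atTop
      (𝓝 (exp (-x))) := by
    have hden := ((tendsto_const_nhds (x := x)).div_atTop hL).const_sub 1
    simpa using ((tendsto_const_nhds (x := x)).div hden (by simp)).neg.rexp
  refine hlim.congr' ?_
  filter_upwards [hL.eventually_gt_atTop (max x 0), eventually_gt_atTop 0] with K hKL hK
  have hLx : Real.log K + A - x ≠ 0 := by linarith [le_max_left x 0]
  have hL0 : Real.log K + A ≠ 0 := by linarith [le_max_right x 0]
  have hK' : (0 : ℝ) < K := by exact_mod_cast hK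
  rw [sinr_exponent_sinrLocation_add x hc hρ hδ hL0 hLx,
    show A - (Real.log K + A) = -Real.log K by ring, exp_sub, exp_neg (Real.log K), exp_log hK',
    exp_neg]
  field_simp

/-- Von Mises condition for the SINR distribution: the growth function
`g = (1−F)/f = ρ(1−δ²γ)²/(mN)` has derivative tending to `0` at the right endpoint
`1/δ²`, hence `F` is in the domain of attraction of the Gumbel law `exp(−e^{−γ})`. -/
theorem sinr_von_mises_gumbel (m ρ N δ2 : ℝ) (hm : 0 < m) (hρ : 0 < ρ) (hN : 0 < N)
    (hδ : 0 < δ2) (F f g : ℝ → ℝ)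
    (hF : ∀ γ, F γ = 1 - Real.exp (-(m * N * γ) / (ρ * (1 - δ2 * γ))))
    (hf : ∀ γ, f γ = m * N / (ρ * (1 - δ2 * γ) ^ 2)
      * Real.exp (-(m * N * γ) / (ρ * (1 - δ2 * γ))))
    (hg : ∀ γ, g γ = ρ * (1 - δ2 * γ) ^ 2 / (m * N)) :
    (∀ γ ∈ Set.Ico (0 : ℝ) (1 / δ2), (1 - F γ) / f γ = g γ) ∧
    Tendsto (deriv g) (nhdsWithin (1 / δ2) (Set.Iio (1 / δ2))) (nhds 0) ∧
    ∃ a b : ℕ → ℝ, (∀ K, 0 < b K) ∧ ∀ x : ℝ,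
      Tendsto (fun K : ℕ => (F (a K + b K * x)) ^ K) atTop
        (nhds (Real.exp (-Real.exp (-x)))) := by
  have hmN : m * N ≠ 0 := (mul_pos hm hN).ne'
  refine ⟨fun γ _ => ?_, ?_, ?_⟩
  · rw [hF, hf, hg]
    by_cases ht : 1 - δ2 * γ = 0
    · simp [ht]
    · field_simp
      ring
  · obtain rfl : g = _ := funext hg
    exact (tendsto_deriv_mul_one_sub_sq_div ρ (m * N) hδ.ne').mono_left nhdsWithin_le_nhds
  · set A := m * N / (ρ * δ2)
    have hA : 0 < A := by positivity
    refine ⟨fun K => sinrLocation A δ2 (Real.log K + A), fun K => sinrScale A δ2 (Real.log K + A),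
      fun K => sinrScale_pos hA hδ (by linarith [log_natCast_nonneg K]), fun x => ?_⟩
    refine tendsto_pow_of_tendsto_mul_one_sub ?_
    simpa only [hF, sub_sub_cancel] using tendsto_nat_mul_exp_sinr_exponent hmN hρ.ne' hδ.ne' x
end
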